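/- arXiv:2408.05954 — 6 statements merged into one kernel-verified Lean document; each statement's English description precedes it below -/
import Mathlib

section
/- Let 𝒞 = (C, Q, 𝒯) be a fully ≼₀-compatible counter system and 𝒞_α its 01-counter system. For every finite sequence of steps (c₀,v̂₀) → (c₁,v̂₁) → … → (c_n,v̂_n) in 𝒞_α starting in an initial configuration of 𝒞_α, there exists a sequence of steps (c₀,v₀) → (c₁,v₁) → … → (c_n,v_n) in 𝒞 starting in an initial configuration of 𝒞 such that α(c_i,v_i) = (c_i,v̂_i) for every 0 ≤ i ≤ n. -/
namespace CS01

variable {C Q A : Type*}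

/-- Configurations of a counter system: a controller state and a counter vector. -/
abbrev Conf (C Q : Type*) := C × (Q → ℕ)

/-- The order `≼₀`: same controller state, pointwise smaller counters,
and the same zero pattern. -/
def Le0 (x y : Conf C Q) : Prop :=
  x.1 = y.1 ∧ (∀ q, x.2 q ≤ y.2 q) ∧ ∀ q, (x.2 q = 0 ↔ y.2 q = 0)

/-- The product order `≼₀ × ≼₀` on pairs of configurations. -/
def ProdLe0 (s t : Conf C Q × Conf C Q) : Prop :=
  Le0 s.1 t.1 ∧ Le0 s.2 t.2

/-- The abstraction `α`, mapping a configuration to its 01-abstraction. -/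
def alpha (x : Conf C Q) : Conf C Q :=
  (x.1, fun q => if x.2 q = 0 then 0 else 1)

/-- Forward `≼₀`-compatibility of a step relation. -/
def FwdCompat (T : Set (Conf C Q × Conf C Q)) : Prop :=
  ∀ x y d, (x, y) ∈ T → Le0 x d → ∃ d', (d, d') ∈ T ∧ Le0 y d'

/-- Backward `≼₀`-compatibility of a step relation. -/
def BwdCompat (T : Set (Conf C Q × Conf C Q)) : Prop :=
  ∀ x y d', (x, y) ∈ T → Le0 y d' → ∃ d, (d, d') ∈ T ∧ Le0 x d

/-- Steps of a counter system are size-preserving. -/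
def SizePreserving [Fintype Q] (T : Set (Conf C Q × Conf C Q)) : Prop :=
  ∀ t ∈ T, ∑ q, t.1.2 q = ∑ q, t.2.2 q

/-- A step of the 01-counter system `𝒞_α`. -/
def AbsStep (T : Set (Conf C Q × Conf C Q)) (x' y' : Conf C Q) : Prop :=
  ∃ t ∈ T, alpha t.1 = x' ∧ alpha t.2 = y'

/-- A finite run of the counter system, starting in an initial configuration. -/
def IsRun (T : Set (Conf C Q × Conf C Q)) (c0 : C) (Q0 : Set Q)
    {n : ℕ} (ρ : Fin (n + 1) → Conf C Q) : Prop :=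
  (ρ 0).1 = c0 ∧ (∀ q ∉ Q0, (ρ 0).2 q = 0) ∧
    ∀ i : Fin n, (ρ i.castSucc, ρ i.succ) ∈ T

/-- A finite run of the 01-counter system, starting in an initial (0/1-valued)
abstract configuration. -/
def IsAbsRun (T : Set (Conf C Q × Conf C Q)) (c0 : C) (Q0 : Set Q)
    {n : ℕ} (σ : Fin (n + 1) → Conf C Q) : Prop :=
  (σ 0).1 = c0 ∧ (∀ q, (σ 0).2 q ≤ 1) ∧ (∀ q ∉ Q0, (σ 0).2 q = 0) ∧
    ∀ i : Fin n, AbsStep T (σ i.castSucc) (σ i.succ)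

/-- Reachability in the counter system. -/
def Reach (T : Set (Conf C Q × Conf C Q)) (c0 : C) (Q0 : Set Q)
    (x : Conf C Q) : Prop :=
  ∃ (n : ℕ) (ρ : Fin (n + 1) → Conf C Q), IsRun T c0 Q0 ρ ∧ ρ (Fin.last n) = x

/-- Reachability in the 01-counter system. -/
def AbsReach (T : Set (Conf C Q × Conf C Q)) (c0 : C) (Q0 : Set Q)
    (x : Conf C Q) : Prop :=
  ∃ (n : ℕ) (σ : Fin (n + 1) → Conf C Q), IsAbsRun T c0 Q0 σ ∧ σ (Fin.last n) = x

/-- The counter vector obtained when `i` processes move from `p` to `p'`. -/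
def moveN [DecidableEq Q] (v : Q → ℕ) (p p' : Q) (i : ℕ) : Q → ℕ :=
  fun q => v q - (if q = p then i else 0) + (if q = p' then i else 0)

lemma le0_alpha {x y : Conf C Q} (h : Le0 x y) : alpha x = alpha y := by
  obtain ⟨h1, _, h3⟩ := h
  refine Prod.ext h1 ?_
  funext q
  by_cases hq : x.2 q = 0
  · simp [alpha, hq, (h3 q).1 hq]
  · have hy : y.2 q ≠ 0 := fun h' => hq ((h3 q).2 h')
    simp [alpha, hq, hy]

lemma alpha_inv {x y : Conf C Q} (h : alpha x = alpha y) :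
    x.1 = y.1 ∧ ∀ q, (x.2 q = 0 ↔ y.2 q = 0) := by
  refine ⟨congrArg (·.1) h, fun q => ?_⟩
  have := congrFun (congrArg Prod.snd h) q
  simp only [alpha] at this
  by_cases h1 : x.2 q = 0 <;> by_cases h2 : y.2 q = 0 <;> simp_all

lemma le0_max {x y : Conf C Q} (h : alpha x = alpha y) :
    Le0 x (x.1, fun q => max (x.2 q) (y.2 q)) ∧
    Le0 y (x.1, fun q => max (x.2 q) (y.2 q)) := by
  obtain ⟨h1, h3⟩ := alpha_inv h
  refine ⟨⟨rfl, fun q => le_max_left _ _, fun q => ?_⟩,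
          ⟨h1.symm, fun q => le_max_right _ _, fun q => ?_⟩⟩ <;>
  · simp only [Nat.max_eq_zero_iff]
    have := h3 q; tauto

lemma lift (T : Set (Conf C Q × Conf C Q)) (hb : BwdCompat T) :
    ∀ (n : ℕ) (ρ : Fin (n + 1) → Conf C Q),
      (∀ i : Fin n, (ρ i.castSucc, ρ i.succ) ∈ T) →
      ∀ w, Le0 (ρ (Fin.last n)) w →
      ∃ τ : Fin (n + 1) → Conf C Q,
        (∀ i : Fin n, (τ i.castSucc, τ i.succ) ∈ T) ∧
        (∀ j, Le0 (ρ j) (τ j)) ∧ τ (Fin.last n) = w := by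
  intro n
  induction n with
  | zero =>
    intro ρ _ w hw
    refine ⟨fun _ => w, fun i => i.elim0, fun j => ?_, rfl⟩
    have hj : j = Fin.last 0 := Fin.ext (by omega)
    rwa [hj]
  | succ n ih =>
    intro ρ hstep w hw
    have hlast : (ρ (Fin.last n).castSucc, ρ (Fin.last (n+1))) ∈ T := by
      have := hstep (Fin.last n); rwa [Fin.succ_last] at this
    obtain ⟨d, hdw, hd⟩ := hb _ _ _ hlast hw
    obtain ⟨τ', hτ'step, hτ'le, hτ'last⟩ :=
      ih (fun j => ρ j.castSucc)
        (fun i => by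
          have := hstep i.castSucc
          rw [Fin.succ_castSucc] at this; exact this)
        d hd
    refine ⟨Fin.snoc τ' w, ?_, ?_, by simp⟩
    · intro i
      refine Fin.lastCases ?_ ?_ i
      · simp only [Fin.succ_last, Fin.snoc_last, Fin.snoc_castSucc, hτ'last]
        exact hdw
      · intro j
        simp only [Fin.succ_castSucc, Fin.snoc_castSucc]
        exact hτ'step j
    · intro j
      refine Fin.lastCases ?_ ?_ j
      · simpa using hw
      · intro j
        simpa using hτ'le j

/-- For a fully `≼₀`-compatible counter system `𝒞`, every run of
the 01-counter system `𝒞_α` is the `α`-image of some run of `𝒞`. -/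
theorem stmt2 [Fintype C] [Fintype Q] [Nonempty C] [Nonempty Q]
    (T : Set (Conf C Q × Conf C Q)) (hsize : SizePreserving T)
    (hf : FwdCompat T) (hb : BwdCompat T)
    (c0 : C) (Q0 : Set Q) (n : ℕ) (σ : Fin (n + 1) → Conf C Q)
    (hrun : IsAbsRun T c0 Q0 σ) :
    ∃ ρ : Fin (n + 1) → Conf C Q, IsRun T c0 Q0 ρ ∧ ∀ i, alpha (ρ i) = σ i := by
  induction n with
  | zero =>
    obtain ⟨hc0, hle1, hQ0, _⟩ := hrun
    refine ⟨σ, ⟨hc0, hQ0, fun i => i.elim0⟩, fun i => ?_⟩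
    have hi : i = 0 := Fin.ext (by omega)
    subst hi
    refine Prod.ext rfl ?_
    funext q
    have := hle1 q
    simp only [alpha]
    split <;> omega
  | succ n ih =>
    obtain ⟨hc0, hle1, hQ0, hsteps⟩ := hrun
    obtain ⟨ρ', hρ'run, hρ'α⟩ := ih (fun j : Fin (n+1) => σ j.castSucc)
      ⟨hc0, hle1, hQ0, fun i => by
        have := hsteps i.castSucc
        rw [Fin.succ_castSucc] at this; exact this⟩
    obtain ⟨⟨x, y⟩, hxyT, hx, hy⟩ := hsteps (Fin.last n)
    have hα : alpha x = alpha (ρ' (Fin.last n)) := by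
      rw [hx, hρ'α (Fin.last n)]
    obtain ⟨hxw, hρw⟩ := le0_max hα
    obtain ⟨τ, hτstep, hτle, hτlast⟩ := lift T hb n ρ' hρ'run.2.2 _ hρw
    rw [← hτlast] at hxw
    obtain ⟨w', hww', hyw'⟩ := hf x y (τ (Fin.last n)) hxyT hxw
    refine ⟨Fin.snoc τ w', ⟨?_, ?_, ?_⟩, ?_⟩
    · have h0 : (Fin.snoc τ w' : Fin (n+1+1) → Conf C Q) 0 = τ 0 := by
        rw [show (0 : Fin (n+1+1)) = Fin.castSucc 0 from rfl, Fin.snoc_castSucc]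
      rw [h0, ← (hτle 0).1]
      exact hρ'run.1
    · intro q hq
      have h0 : (Fin.snoc τ w' : Fin (n+1+1) → Conf C Q) 0 = τ 0 := by
        rw [show (0 : Fin (n+1+1)) = Fin.castSucc 0 from rfl, Fin.snoc_castSucc]
      rw [h0]
      exact ((hτle 0).2.2 q).1 (hρ'run.2.1 q hq)
    · intro i
      refine Fin.lastCases ?_ ?_ i
      · simp only [Fin.succ_last, Fin.snoc_last, Fin.snoc_castSucc]
        exact hww'
      · intro j
        simp only [Fin.succ_castSucc, Fin.snoc_castSucc]
        exact hτstep j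
    · intro i
      refine Fin.lastCases ?_ ?_ i
      · rw [Fin.snoc_last, ← le0_alpha hyw', hy, Fin.succ_last]
      · intro j
        rw [Fin.snoc_castSucc, ← le0_alpha (hτle j), hρ'α j]
end CS01
end

section
/- Every counter system whose step relation 𝒯 consists exactly of the lossy broadcast steps induced by a finite set of lossy broadcast transitions is fully ≼₀-compatible. -/
/-!
An extra token at a state `q` can always follow the given step. If some process leaves `q`
in the step, the token repeats one of these transitions (repeating the broadcast transition
keeps the step a lossy broadcast); otherwise it stays in `q`. Either way it ends in a state
that is occupied after the step, so the zero pattern is unchanged. Adding the tokens of the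
larger configuration one at a time gives forward compatibility, and backward compatibility
is forward compatibility of the system with every transition reversed.
-/

namespace CS01

variable {C Q A : Type*}

/-- Labels of lossy broadcast transitions: broadcast `!a` or receive `?a`. -/
inductive LBLab (A : Type*) where
  | br : A → LBLab A
  | rcv : A → LBLab A

/-- Number of transitions in the multiset `M` with source `q`. -/
def srcCount [DecidableEq Q] (M : Multiset (Q × Q)) (q : Q) : ℕ :=
  (M.map Prod.fst).count q

/-- Number of transitions in the multiset `M` with target `q`. -/
def tgtCount [DecidableEq Q] (M : Multiset (Q × Q)) (q : Q) : ℕ :=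
  (M.map Prod.snd).count q

/-- A lossy broadcast step induced by controller transitions `ΔC` and
user transitions `ΔQ`: one broadcast transition on some letter `a` is taken by
`j ≥ 1` processes, and an arbitrary multiset of receive transitions on `a` is
taken, each by one process; the controller takes at most one of the transitions. -/
def LBStep [DecidableEq Q] (ΔC : Set (C × LBLab A × C)) (ΔQ : Set (Q × LBLab A × Q))
    (x y : Conf C Q) : Prop :=
  ∃ (a : A) (Mb Mr : Multiset (Q × Q)),
    (∀ t ∈ Mb, (t.1, LBLab.br a, t.2) ∈ ΔQ) ∧
    (∀ t ∈ Mr, (t.1, LBLab.rcv a, t.2) ∈ ΔQ) ∧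
    -- the unique broadcast transition is taken either by the controller
    -- (and then no user broadcasts), or by j ≥ 1 user processes (and then the
    -- controller either takes a receive transition or does not move)
    (((x.1, LBLab.br a, y.1) ∈ ΔC ∧ Mb = 0) ∨
      ((∃ p0 p0' j, 1 ≤ j ∧ (p0, LBLab.br a, p0') ∈ ΔQ ∧
          Mb = Multiset.replicate j (p0, p0')) ∧
        ((x.1, LBLab.rcv a, y.1) ∈ ΔC ∨ y.1 = x.1))) ∧
    (∀ q, srcCount (Mb + Mr) q ≤ x.2 q) ∧
    ∀ q, y.2 q = x.2 q - srcCount (Mb + Mr) q + tgtCount (Mb + Mr) q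

section Counts

variable [DecidableEq Q]

lemma srcCount_cons (t : Q × Q) (M : Multiset (Q × Q)) :
    srcCount (t ::ₘ M) = srcCount M + Pi.single t.1 1 := by
  funext q
  simp [srcCount, Multiset.count_cons, Pi.single_apply]

lemma tgtCount_cons (t : Q × Q) (M : Multiset (Q × Q)) :
    tgtCount (t ::ₘ M) = tgtCount M + Pi.single t.2 1 := by
  funext q
  simp [tgtCount, Multiset.count_cons, Pi.single_apply]

lemma srcCount_map_swap (M : Multiset (Q × Q)) :
    srcCount (M.map Prod.swap) = tgtCount M := by
  funext q
  simp [srcCount, tgtCount, Multiset.map_map]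

lemma tgtCount_map_swap (M : Multiset (Q × Q)) :
    tgtCount (M.map Prod.swap) = srcCount M := by
  funext q
  simp [srcCount, tgtCount, Multiset.map_map]

lemma exists_mem_fst_eq_of_srcCount_ne_zero {M : Multiset (Q × Q)} {q : Q}
    (h : srcCount M q ≠ 0) : ∃ t ∈ M, t.1 = q :=
  Multiset.mem_map.1 (Multiset.count_ne_zero.1 h)

lemma tgtCount_ne_zero_of_mem {M : Multiset (Q × Q)} {t : Q × Q} (h : t ∈ M) :
    tgtCount M t.2 ≠ 0 :=
  Multiset.count_ne_zero.2 (Multiset.mem_map_of_mem _ h)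

end Counts

section Le0

lemma Le0.refl (x : Conf C Q) : Le0 x x :=
  ⟨rfl, fun _ => le_rfl, fun _ => Iff.rfl⟩

lemma Le0.trans {x y z : Conf C Q} (hxy : Le0 x y) (hyz : Le0 y z) : Le0 x z :=
  ⟨hxy.1.trans hyz.1, fun q => (hxy.2.1 q).trans (hyz.2.1 q),
    fun q => (hxy.2.2 q).trans (hyz.2.2 q)⟩

lemma le0_add_single [DecidableEq Q] {x : Conf C Q} {q : Q} (hq : x.2 q ≠ 0) :
    Le0 x (x.1, x.2 + Pi.single q 1) := by
  refine ⟨rfl, fun r => by simp, fun r => ?_⟩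
  by_cases h : r = q
  · subst h; simp [hq]
  · simp [h]

theorem Le0.induction_add_single [Fintype Q] [DecidableEq Q] {x : Conf C Q}
    {P : Conf C Q → Prop} (base : P x)
    (step : ∀ z q, z.2 q ≠ 0 → P z → P (z.1, z.2 + Pi.single q 1))
    {d : Conf C Q} (hxd : Le0 x d) : P d := by
  obtain ⟨n, hn⟩ : ∃ n, ∑ q, (d.2 q - x.2 q) = n := ⟨_, rfl⟩
  induction n generalizing d with
  | zero =>
    have hd : d = x := by
      refine Prod.ext hxd.1.symm (funext fun q => ?_)
      have := (Finset.sum_eq_zero_iff.1 hn) q (Finset.mem_univ q)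
      have := hxd.2.1 q
      omega
    exact hd ▸ base
  | succ n ih =>
    obtain ⟨q, hq⟩ : ∃ q, x.2 q < d.2 q := by
      by_contra! h
      simp [Nat.sub_eq_zero_of_le (h _)] at hn
    set s : Q → ℕ := Pi.single q 1
    have hs : ∀ r, s r ≤ d.2 r - x.2 r := fun r => by
      by_cases h : r = q
      · subst h
        simp only [s, Pi.single_eq_same]
        omega
      · simp [s, h]
    set d₀ : Conf C Q := (d.1, d.2 - s)
    have hd : d = (d₀.1, d₀.2 + s) :=
      Prod.ext rfl <| funext fun r => by
        have := hs r
        simp only [d₀, Pi.add_apply, Pi.sub_apply]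
        omega
    have hxd₀ : Le0 x d₀ := by
      refine ⟨hxd.1, fun r => ?_, fun r => ?_⟩ <;>
      · have := hs r; have := hxd.2.1 r; have := hxd.2.2 r
        simp only [d₀, Pi.sub_apply]
        omega
    have hn₀ : ∑ r, (d₀.2 r - x.2 r) = n := by
      have hsplit : ∑ r, (d.2 r - x.2 r) = ∑ r, (d₀.2 r - x.2 r) + ∑ r, s r := by
        rw [← Finset.sum_add_distrib]
        exact Finset.sum_congr rfl fun r _ => by
          have := hs r; simp only [d₀, Pi.sub_apply]; omega
      rw [hsplit, Finset.sum_pi_single'] at hn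
      simpa using hn
    have hxq : x.2 q ≠ 0 := fun h0 => by have := (hxd.2.2 q).1 h0; omega
    exact hd ▸ step d₀ q ((hxd₀.2.2 q).not.1 hxq) (ih hxd₀ hn₀)

theorem fwdCompat_of_add_single [Fintype Q] [DecidableEq Q] {T : Set (Conf C Q × Conf C Q)}
    (h : ∀ x y q, (x, y) ∈ T → x.2 q ≠ 0 →
      ∃ y', ((x.1, x.2 + Pi.single q 1), y') ∈ T ∧ Le0 y y') :
    FwdCompat T := by
  intro x y d hxy hxd
  refine Le0.induction_add_single (P := fun d => ∃ d', (d, d') ∈ T ∧ Le0 y d')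
    ⟨y, hxy, Le0.refl y⟩ ?_ hxd
  rintro z q hq ⟨z', hzz', hyz'⟩
  obtain ⟨y', hy', hzy'⟩ := h z z' q hzz' hq
  exact ⟨y', hy', hyz'.trans hzy'⟩

end Le0

/-- `LBStep` without the counters: the controller move `c → c'` and the user transitions `M`
form a lossy broadcast on the letter `a`. -/
def LBMoves (ΔC : Set (C × LBLab A × C)) (ΔQ : Set (Q × LBLab A × Q)) (a : A) (c c' : C)
    (M : Multiset (Q × Q)) : Prop :=
  ∃ Mb Mr : Multiset (Q × Q), M = Mb + Mr ∧
    (∀ t ∈ Mb, (t.1, LBLab.br a, t.2) ∈ ΔQ) ∧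
    (∀ t ∈ Mr, (t.1, LBLab.rcv a, t.2) ∈ ΔQ) ∧
    (((c, LBLab.br a, c') ∈ ΔC ∧ Mb = 0) ∨
      ((∃ p0 p0' j, 1 ≤ j ∧ (p0, LBLab.br a, p0') ∈ ΔQ ∧
          Mb = Multiset.replicate j (p0, p0')) ∧
        ((c, LBLab.rcv a, c') ∈ ΔC ∨ c' = c)))

def revTrans {S L : Type*} (Δ : Set (S × L × S)) : Set (S × L × S) :=
  {t | (t.2.2, t.2.1, t.1) ∈ Δ}

section LBMoves

variable {ΔC : Set (C × LBLab A × C)} {ΔQ : Set (Q × LBLab A × Q)} {a : A} {c c' : C}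
  {M : Multiset (Q × Q)}

lemma lbStep_iff [DecidableEq Q] {x y : Conf C Q} :
    LBStep ΔC ΔQ x y ↔ ∃ a M, LBMoves ΔC ΔQ a x.1 y.1 M ∧
      (∀ q, srcCount M q ≤ x.2 q) ∧ ∀ q, y.2 q = x.2 q - srcCount M q + tgtCount M q := by
  constructor
  · rintro ⟨a, Mb, Mr, hb, hr, hc, hsrc, hy⟩
    exact ⟨a, Mb + Mr, ⟨Mb, Mr, rfl, hb, hr, hc⟩, hsrc, hy⟩
  · rintro ⟨a, _, ⟨Mb, Mr, rfl, hb, hr, hc⟩, hsrc, hy⟩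
    exact ⟨a, Mb, Mr, hb, hr, hc, hsrc, hy⟩

lemma LBMoves.cons_of_mem (h : LBMoves ΔC ΔQ a c c' M) {t : Q × Q} (ht : t ∈ M) :
    LBMoves ΔC ΔQ a c c' (t ::ₘ M) := by
  obtain ⟨Mb, Mr, rfl, hb, hr, hc⟩ := h
  rcases Multiset.mem_add.1 ht with htb | htr
  · refine ⟨t ::ₘ Mb, Mr, (Multiset.cons_add t Mb Mr).symm, ?_, hr, ?_⟩
    · intro s hs
      rcases Multiset.mem_cons.1 hs with rfl | hs
      exacts [hb s htb, hb s hs]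
    · rcases hc with ⟨-, rfl⟩ | ⟨⟨p0, p0', j, hj, hp, rfl⟩, hctl⟩
      · simp at htb
      · obtain rfl := Multiset.eq_of_mem_replicate htb
        exact Or.inr
          ⟨⟨p0, p0', j + 1, by omega, hp, (Multiset.replicate_succ _ _).symm⟩, hctl⟩
  · refine ⟨Mb, t ::ₘ Mr, (Multiset.add_cons t Mb Mr).symm, hb, ?_, hc⟩
    intro s hs
    rcases Multiset.mem_cons.1 hs with rfl | hs
    exacts [hr s htr, hr s hs]

lemma LBMoves.rev (h : LBMoves ΔC ΔQ a c c' M) :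
    LBMoves (revTrans ΔC) (revTrans ΔQ) a c' c (M.map Prod.swap) := by
  obtain ⟨Mb, Mr, rfl, hb, hr, hc⟩ := h
  refine ⟨Mb.map Prod.swap, Mr.map Prod.swap, Multiset.map_add _ _ _, ?_, ?_, ?_⟩
  · simp only [Multiset.mem_map, revTrans]
    rintro _ ⟨t, ht, rfl⟩
    exact hb t ht
  · simp only [Multiset.mem_map, revTrans]
    rintro _ ⟨t, ht, rfl⟩
    exact hr t ht
  · rcases hc with ⟨hC, rfl⟩ | ⟨⟨p0, p0', j, hj, hp, rfl⟩, hctl⟩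
    · exact Or.inl ⟨hC, Multiset.map_zero _⟩
    · refine Or.inr ⟨⟨p0', p0, j, hj, hp, by simp [Multiset.map_replicate]⟩, ?_⟩
      rcases hctl with hC | rfl
      exacts [Or.inl hC, Or.inr rfl]

end LBMoves

section LBStep

variable [DecidableEq Q] {ΔC : Set (C × LBLab A × C)} {ΔQ : Set (Q × LBLab A × Q)}
  {x y : Conf C Q}

lemma LBStep.rev (h : LBStep ΔC ΔQ x y) : LBStep (revTrans ΔC) (revTrans ΔQ) y x := by
  obtain ⟨a, M, hM, hsrc, hy⟩ := lbStep_iff.1 h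
  refine lbStep_iff.2 ⟨a, M.map Prod.swap, hM.rev, fun q => ?_, fun q => ?_⟩ <;>
  · simp only [srcCount_map_swap, tgtCount_map_swap]
    have := hsrc q; have := hy q
    omega

lemma LBStep.exists_add_single (h : LBStep ΔC ΔQ x y) {q : Q} (hq : x.2 q ≠ 0) :
    ∃ r, y.2 r ≠ 0 ∧
      LBStep ΔC ΔQ (x.1, x.2 + Pi.single q 1) (y.1, y.2 + Pi.single r 1) := by
  obtain ⟨a, M, hM, hsrc, hy⟩ := lbStep_iff.1 h
  by_cases hyq : y.2 q = 0
  · have hleave : srcCount M q ≠ 0 := by have := hsrc q; have := hy q; omega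
    obtain ⟨t, htM, rfl⟩ := exists_mem_fst_eq_of_srcCount_ne_zero hleave
    refine ⟨t.2, ?_,
      lbStep_iff.2 ⟨a, t ::ₘ M, hM.cons_of_mem htM, fun r => ?_, fun r => ?_⟩⟩
    · have := hy t.2; have := tgtCount_ne_zero_of_mem htM; omega
    · have := hsrc r; simp only [srcCount_cons, Pi.add_apply]; omega
    · have := hsrc r; have := hy r
      simp only [srcCount_cons, tgtCount_cons, Pi.add_apply]; omega
  · refine ⟨q, hyq, lbStep_iff.2 ⟨a, M, hM, fun r => ?_, fun r => ?_⟩⟩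
    · have := hsrc r; simp only [Pi.add_apply]; omega
    · have := hsrc r; have := hy r; simp only [Pi.add_apply]; omega

variable [Fintype Q]

theorem fwdCompat_lbStep (ΔC : Set (C × LBLab A × C)) (ΔQ : Set (Q × LBLab A × Q)) :
    FwdCompat {p : Conf C Q × Conf C Q | LBStep ΔC ΔQ p.1 p.2} :=
  fwdCompat_of_add_single fun _ _ _ hxy hq =>
    let ⟨_, hr, hstep⟩ := LBStep.exists_add_single hxy hq
    ⟨_, hstep, le0_add_single hr⟩

theorem bwdCompat_lbStep (ΔC : Set (C × LBLab A × C)) (ΔQ : Set (Q × LBLab A × Q)) :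
    BwdCompat {p : Conf C Q × Conf C Q | LBStep ΔC ΔQ p.1 p.2} := by
  intro x y d' hxy hyd'
  obtain ⟨d, hd, hxd⟩ := fwdCompat_lbStep (revTrans ΔC) (revTrans ΔQ) y x d' hxy.rev hyd'
  -- `revTrans (revTrans Δ)` is `Δ` up to η for pairs, so `hd.rev` is a step of the original system
  exact ⟨d, hd.rev, hxd⟩

end LBStep

theorem stmt3_general [Fintype Q] [DecidableEq Q]
    (ΔC : Set (C × LBLab A × C)) (ΔQ : Set (Q × LBLab A × Q))
    (T : Set (Conf C Q × Conf C Q))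
    (hT : ∀ x y : Conf C Q, (x, y) ∈ T ↔ LBStep ΔC ΔQ x y) :
    FwdCompat T ∧ BwdCompat T := by
  obtain rfl : T = {p | LBStep ΔC ΔQ p.1 p.2} := Set.ext fun p => hT p.1 p.2
  exact ⟨fwdCompat_lbStep ΔC ΔQ, bwdCompat_lbStep ΔC ΔQ⟩

/-- Every counter system whose steps are exactly the lossy
broadcast steps induced by a finite set of lossy broadcast transitions is
fully `≼₀`-compatible. -/
theorem stmt3 [Fintype C] [Fintype Q] [Nonempty C] [Nonempty Q]
    [Fintype A] [DecidableEq Q]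
    (ΔC : Set (C × LBLab A × C)) (ΔQ : Set (Q × LBLab A × Q))
    (T : Set (Conf C Q × Conf C Q))
    (hT : ∀ x y : Conf C Q, (x, y) ∈ T ↔ LBStep ΔC ΔQ x y) :
    FwdCompat T ∧ BwdCompat T :=
  stmt3_general ΔC ΔQ T hT

end CS01
end

section
/- Every counter system whose step relation 𝒯 consists exactly of the disjunctive-guard steps induced by a finite set of disjunctive-guard transitions is fully ≼₀-compatible. -/
/-!
A guard satisfied by a configuration stays satisfied in every `≼₀`-larger one, so guards
never obstruct the simulation and only the counters need care. A controller step is copied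
verbatim. A user step moving `i` processes from `p` to `p'` is simulated by moving `i`
processes, or all of them when the step empties `p`; this preserves the zero pattern.
Backward compatibility reduces to forward compatibility, because the reverse of a move
from `p` to `p'` is a move from `p'` to `p`.
-/

namespace CS01

variable {C Q A : Type*}

/-- A configuration satisfies a disjunctive guard `G ⊆ C ⊕ Q`. -/
def SatG (x : Conf C Q) (G : Set (C ⊕ Q)) : Prop :=
  Sum.inl x.1 ∈ G ∨ ∃ q, Sum.inr q ∈ G ∧ 1 ≤ x.2 q

/-- A disjunctive-guard step induced by controller transitions `ΔC` and user
transitions `ΔQ`: either the controller takes a guarded transition, or `i ≥ 1`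
user processes take the same guarded transition; the guard must be satisfied
in the source and in the target configuration. -/
def DGStep [DecidableEq Q] (ΔC : Set (C × Set (C ⊕ Q) × C))
    (ΔQ : Set (Q × Set (C ⊕ Q) × Q)) (x y : Conf C Q) : Prop :=
  (∃ G, (x.1, G, y.1) ∈ ΔC ∧ y.2 = x.2 ∧ SatG x G ∧ SatG y G) ∨
  (∃ p G p' i, 1 ≤ i ∧ (p, G, p') ∈ ΔQ ∧ y.1 = x.1 ∧ i ≤ x.2 p ∧
    y.2 = moveN x.2 p p' i ∧ SatG x G ∧ SatG y G)

lemma SatG.of_le0 {x y : Conf C Q} {G : Set (C ⊕ Q)} (hs : SatG x G) (h : Le0 x y) :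
    SatG y G := by
  obtain ⟨hc, hle, -⟩ := h
  rcases hs with hx | ⟨q, hq, hxq⟩
  · exact Or.inl (hc ▸ hx)
  · exact Or.inr ⟨q, hq, hxq.trans (hle q)⟩

section moveN

variable [DecidableEq Q]

lemma le_moveN_target (v : Q → ℕ) (p p' : Q) (i : ℕ) : i ≤ moveN v p p' i p' := by
  simp [moveN]

lemma moveN_moveN_swap {v : Q → ℕ} {p p' : Q} {i : ℕ} (hi : i ≤ v p) :
    moveN (moveN v p p' i) p' p i = v := by
  funext q
  simp only [moveN]
  split_ifs <;> subst_vars <;> omega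

lemma exists_le0_moveN {x d : Conf C Q} (h : Le0 x d) {p p' : Q} {i : ℕ} (hi : 1 ≤ i)
    (hix : i ≤ x.2 p) (c : C) :
    ∃ j, 1 ≤ j ∧ j ≤ d.2 p ∧ Le0 (c, moveN x.2 p p' i) (c, moveN d.2 p p' j) := by
  obtain ⟨-, hle, hz⟩ := h
  have hp := hle p
  have hzp := hz p
  -- If the move empties `p`, so must the simulating move.
  refine ⟨if x.2 p = i then d.2 p else i, by split_ifs <;> omega, by split_ifs <;> omega,
    rfl, fun q => ?_, fun q => ?_⟩ <;>
  · have hq := hle q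
    have hzq := hz q
    simp only [moveN]
    split_ifs <;> subst_vars <;> omega

end moveN

section DGStep

variable [DecidableEq Q] {ΔC : Set (C × Set (C ⊕ Q) × C)} {ΔQ : Set (Q × Set (C ⊕ Q) × Q)}

lemma DGStep.exists_of_le0_source {x y d : Conf C Q} (hxy : DGStep ΔC ΔQ x y)
    (hxd : Le0 x d) : ∃ d', DGStep ΔC ΔQ d d' ∧ Le0 y d' := by
  rcases hxy with ⟨G, hΔ, hy, hSx, hSy⟩ | ⟨p, G, p', i, hi, hΔ, hyc, hix, hy, hSx, hSy⟩
  · have hyd : Le0 y (y.1, d.2) := ⟨rfl, by rw [hy]; exact hxd.2⟩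
    exact ⟨(y.1, d.2), Or.inl ⟨G, hxd.1 ▸ hΔ, rfl, hSx.of_le0 hxd, hSy.of_le0 hyd⟩, hyd⟩
  · obtain ⟨j, hj, hjd, hyd⟩ := exists_le0_moveN hxd hi hix (p' := p') y.1
    rw [← hy] at hyd
    exact ⟨(y.1, moveN d.2 p p' j), Or.inr ⟨p, G, p', j, hj, hΔ, hyc.trans hxd.1, hjd, rfl,
      hSx.of_le0 hxd, hSy.of_le0 hyd⟩, hyd⟩

lemma DGStep.exists_of_le0_target {x y d' : Conf C Q} (hxy : DGStep ΔC ΔQ x y)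
    (hyd : Le0 y d') : ∃ d, DGStep ΔC ΔQ d d' ∧ Le0 x d := by
  rcases hxy with ⟨G, hΔ, hy, hSx, hSy⟩ | ⟨p, G, p', i, hi, hΔ, hyc, hix, hy, hSx, hSy⟩
  · have hxd : Le0 x (x.1, d'.2) := ⟨rfl, by rw [← hy]; exact hyd.2⟩
    exact ⟨(x.1, d'.2), Or.inl ⟨G, hyd.1 ▸ hΔ, rfl, hSx.of_le0 hxd, hSy.of_le0 hyd⟩, hxd⟩
  · have hiy : i ≤ y.2 p' := hy ▸ le_moveN_target x.2 p p' i
    obtain ⟨j, hj, hjd, hxd⟩ := exists_le0_moveN hyd hi hiy (p' := p) x.1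
    rw [hy, moveN_moveN_swap hix] at hxd
    exact ⟨(x.1, moveN d'.2 p' p j), Or.inr ⟨p, G, p', j, hj, hΔ, hyd.1.symm.trans hyc,
      le_moveN_target _ _ _ _, (moveN_moveN_swap hjd).symm, hSx.of_le0 hxd,
      hSy.of_le0 hyd⟩, hxd⟩

end DGStep

theorem stmt4_general [DecidableEq Q]
    (ΔC : Set (C × Set (C ⊕ Q) × C)) (ΔQ : Set (Q × Set (C ⊕ Q) × Q))
    (T : Set (Conf C Q × Conf C Q))
    (hT : ∀ x y : Conf C Q, (x, y) ∈ T ↔ DGStep ΔC ΔQ x y) :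
    FwdCompat T ∧ BwdCompat T := by
  refine ⟨fun x y d hxy hxd => ?_, fun x y d' hxy hyd => ?_⟩
  · obtain ⟨d', hstep, hyd⟩ := ((hT x y).1 hxy).exists_of_le0_source hxd
    exact ⟨d', (hT d d').2 hstep, hyd⟩
  · obtain ⟨d, hstep, hxd⟩ := ((hT x y).1 hxy).exists_of_le0_target hyd
    exact ⟨d, (hT d d').2 hstep, hxd⟩

/-- Every counter system whose steps are exactly the
disjunctive-guard steps induced by a finite set of disjunctive-guard
transitions is fully `≼₀`-compatible. -/
theorem stmt4 [Fintype C] [Fintype Q] [Nonempty C] [Nonempty Q] [DecidableEq Q]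
    (ΔC : Set (C × Set (C ⊕ Q) × C)) (ΔQ : Set (Q × Set (C ⊕ Q) × Q))
    (T : Set (Conf C Q × Conf C Q))
    (hT : ∀ x y : Conf C Q, (x, y) ∈ T ↔ DGStep ΔC ΔQ x y) :
    FwdCompat T ∧ BwdCompat T :=
  stmt4_general ΔC ΔQ T hT

end CS01
end

section
/- Every counter system whose step relation 𝒯 consists exactly of the ASM steps induced by a finite set of asynchronous-shared-memory transitions is fully ≼₀-compatible. -/
namespace CS01

variable {C Q A : Type*}

/-- An asynchronous-shared-memory step, where the controller state plays the
role of the shared variable: either a write step, where `i ≥ 1` user processes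
take a write transition `(p, w(a), p')` and the variable is set to `a`, or a
read step, where `i ≥ 1` user processes take a read transition `(p, r(a), p')`
with `a` equal to the current value of the variable. -/
def ASMStep [DecidableEq Q] (Δw Δr : Set (Q × C × Q)) (x y : Conf C Q) : Prop :=
  (∃ p a p' i, 1 ≤ i ∧ (p, a, p') ∈ Δw ∧ i ≤ x.2 p ∧
    y.1 = a ∧ y.2 = moveN x.2 p p' i) ∨
  (∃ p p' i, 1 ≤ i ∧ (p, x.1, p') ∈ Δr ∧ i ≤ x.2 p ∧
    y.1 = x.1 ∧ y.2 = moveN x.2 p p' i)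

/-- The guard of an ASM step only involves the two controller states, never the counters. -/
lemma asmStep_iff [DecidableEq Q] {Δw Δr : Set (Q × C × Q)} {x y : Conf C Q} :
    ASMStep Δw Δr x y ↔ ∃ p p' i, 1 ≤ i ∧ i ≤ x.2 p ∧ y.2 = moveN x.2 p p' i ∧
      ((p, y.1, p') ∈ Δw ∨ (p, x.1, p') ∈ Δr ∧ y.1 = x.1) := by
  constructor
  · rintro (⟨p, a, p', i, hi, hΔ, hip, rfl, hy⟩ | ⟨p, p', i, hi, hΔ, hip, hc, hy⟩)
    · exact ⟨p, p', i, hi, hip, hy, .inl hΔ⟩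
    · exact ⟨p, p', i, hi, hip, hy, .inr ⟨hΔ, hc⟩⟩
  · rintro ⟨p, p', i, hi, hip, hy, hΔ | ⟨hΔ, hc⟩⟩
    · exact .inl ⟨p, y.1, p', i, hi, hΔ, hip, rfl, hy⟩
    · exact .inr ⟨p, p', i, hi, hΔ, hip, hc, hy⟩

/-- The surplus `w p - v p` of the larger vector moves along with the `i` processes,
so that `p` is emptied in both vectors or in neither. -/
lemma exists_moveN_le0_of_le0 [DecidableEq Q] {v w : Q → ℕ}
    (hle : ∀ q, v q ≤ w q) (h0 : ∀ q, v q = 0 ↔ w q = 0) {p : Q} (p' : Q) {i : ℕ}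
    (hi : 1 ≤ i) (hip : i ≤ v p) :
    ∃ j, 1 ≤ j ∧ j ≤ w p ∧ (∀ q, moveN v p p' i q ≤ moveN w p p' j q) ∧
      ∀ q, (moveN v p p' i q = 0 ↔ moveN w p p' j q = 0) := by
  have hp := hle p
  refine ⟨w p - v p + i, by omega, by omega, fun q => ?_, fun q => ?_⟩
  all_goals
    have := hle q
    have := h0 q
    simp only [moveN]
    split_ifs <;> subst_vars <;> omega

/-- The surplus `w' p' - moveN v p p' i p'` is moved back to `p`, which is nonempty in `v`. -/
lemma exists_le0_moveN_eq [DecidableEq Q] {v w' : Q → ℕ} {p p' : Q} {i : ℕ}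
    (hi : 1 ≤ i) (hip : i ≤ v p)
    (hle : ∀ q, moveN v p p' i q ≤ w' q) (h0 : ∀ q, moveN v p p' i q = 0 ↔ w' q = 0) :
    ∃ w j, 1 ≤ j ∧ j ≤ w p ∧ moveN w p p' j = w' ∧
      (∀ q, v q ≤ w q) ∧ ∀ q, (v q = 0 ↔ w q = 0) := by
  have hp := hle p
  have hp' := hle p'
  refine ⟨moveN w' p' p (w' p' - moveN v p p' i p' + i), w' p' - moveN v p p' i p' + i,
    by omega, ?_, funext fun q => ?_, fun q => ?_, fun q => ?_⟩
  · simp only [moveN] at hp hp' ⊢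
    split_ifs at hp hp' ⊢ <;> subst_vars <;> first | contradiction | omega
  all_goals
    have hq := hle q
    have hq0 := h0 q
    simp only [moveN] at hp hp' hq hq0 ⊢
    split_ifs at hp hp' hq hq0 ⊢ <;> subst_vars <;> first | contradiction | omega

lemma ASMStep.exists_step_of_le0_source [DecidableEq Q] {Δw Δr : Set (Q × C × Q)}
    {x y d : Conf C Q} (h : ASMStep Δw Δr x y) (hxd : Le0 x d) :
    ∃ d', ASMStep Δw Δr d d' ∧ Le0 y d' := by
  obtain ⟨hc, hle, h0⟩ := hxd
  obtain ⟨p, p', i, hi, hip, hy, hΔ⟩ := asmStep_iff.1 h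
  obtain ⟨j, hj, hjp, hle', h0'⟩ := exists_moveN_le0_of_le0 hle h0 p' hi hip
  refine ⟨(y.1, moveN d.2 p p' j), asmStep_iff.2 ⟨p, p', j, hj, hjp, rfl, hc ▸ hΔ⟩, rfl,
    ?_, ?_⟩
  · simpa only [hy] using hle'
  · simpa only [hy] using h0'

lemma ASMStep.exists_step_of_le0_target [DecidableEq Q] {Δw Δr : Set (Q × C × Q)}
    {x y d' : Conf C Q} (h : ASMStep Δw Δr x y) (hyd : Le0 y d') :
    ∃ d, ASMStep Δw Δr d d' ∧ Le0 x d := by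
  obtain ⟨hc, hle, h0⟩ := hyd
  obtain ⟨p, p', i, hi, hip, hy, hΔ⟩ := asmStep_iff.1 h
  rw [hy] at hle h0
  obtain ⟨w, j, hj, hjp, hw, hle', h0'⟩ := exists_le0_moveN_eq hi hip hle h0
  exact ⟨(x.1, w), asmStep_iff.2 ⟨p, p', j, hj, hjp, hw.symm, hc ▸ hΔ⟩, rfl, hle', h0'⟩

theorem stmt6_general [DecidableEq Q]
    (Δw Δr : Set (Q × C × Q))
    (T : Set (Conf C Q × Conf C Q))
    (hT : ∀ x y : Conf C Q, (x, y) ∈ T ↔ ASMStep Δw Δr x y) :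
    FwdCompat T ∧ BwdCompat T := by
  constructor
  · intro x y d hxy hxd
    simpa only [hT] using ((hT x y).1 hxy).exists_step_of_le0_source hxd
  · intro x y d' hxy hyd
    simpa only [hT] using ((hT x y).1 hxy).exists_step_of_le0_target hyd

/-- Every counter system whose steps are exactly the ASM steps
induced by a finite set of asynchronous-shared-memory transitions is fully
`≼₀`-compatible. -/
theorem stmt6 [Fintype C] [Fintype Q] [Nonempty C] [Nonempty Q] [DecidableEq Q]
    (Δw Δr : Set (Q × C × Q))
    (T : Set (Conf C Q × Conf C Q))
    (hT : ∀ x y : Conf C Q, (x, y) ∈ T ↔ ASMStep Δw Δr x y) :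
    FwdCompat T ∧ BwdCompat T :=
  stmt6_general Δw Δr T hT

end CS01
end

section
/- Every counter system whose step relation 𝒯 consists exactly of the guarded synchronization steps induced by a finite set of synchronization transitions together with a guard pair (G∃^a, G∀^a) for each label a is fully ≼₀-compatible. -/
/-!
The user part of a synchronization step on a letter `a` is a transport plan: a matrix `K`
over `Q × Q`, supported on the `a`-transitions and on the loops at states that are not
`a`-enabled, whose row sums are the source counters and whose column sums are the target
counters. If the source counters grow without changing their zero pattern, the surplus of each
occupied state can be sent along one transition already used from that state; this keeps the
support of `K`, so the column sums grow with the same zero pattern. Transposing the plan gives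
the backward direction. Guards only see the controller state and the occupied user states, which
`≼₀` preserves.
-/

namespace CS01

variable {C Q A : Type*}

/-- A synchronization step on letter `a`: every process whose current state has
an outgoing `a`-transition takes some `a`-transition; processes without an
`a`-transition stay put. `k p p'` is the number of user processes taking the
transition `(p, a, p')`. -/
def SyncStepOn [Fintype Q] (ΔC : Set (C × A × C)) (ΔQ : Set (Q × A × Q)) (a : A)
    (x y : Conf C Q) : Prop :=
  ((∃ c', (x.1, a, c') ∈ ΔC) → (x.1, a, y.1) ∈ ΔC) ∧
  (¬ (∃ c', (x.1, a, c') ∈ ΔC) → y.1 = x.1) ∧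
  ∃ k : Q → Q → ℕ,
    (∀ p p', k p p' ≠ 0 → (p, a, p') ∈ ΔQ) ∧
    (∀ q, (∃ q', (q, a, q') ∈ ΔQ) → ∑ p', k q p' = x.2 q) ∧
    (∀ q, (∃ q', (q, a, q') ∈ ΔQ) → y.2 q = ∑ p, k p q) ∧
    (∀ q, ¬ (∃ q', (q, a, q') ∈ ΔQ) → y.2 q = x.2 q + ∑ p, k p q)

/-- A synchronization step: a synchronization step on some letter `a`. -/
def SyncStep [Fintype Q] (ΔC : Set (C × A × C)) (ΔQ : Set (Q × A × Q))
    (x y : Conf C Q) : Prop :=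
  ∃ a : A, SyncStepOn ΔC ΔQ a x y

/-- The enabling condition of a guard pair `(Ge, Ga)` in a configuration `x`:
letting `S` be the set of occupied states (controller state plus all user
states holding at least one process), we require `S ∩ Ge ≠ ∅` and `S ⊆ Ga`. -/
def GuardOK (Ge Ga : Set (C ⊕ Q)) (x : Conf C Q) : Prop :=
  ((Sum.inl x.1 ∈ Ge) ∨ ∃ q, 1 ≤ x.2 q ∧ Sum.inr q ∈ Ge) ∧
  ((Sum.inl x.1 ∈ Ga) ∧ ∀ q, 1 ≤ x.2 q → Sum.inr q ∈ Ga)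

/-- A guarded synchronization step: a synchronization step on a letter `a`
whose guard pair `(Ge a, Ga a)` is enabled in the source configuration. -/
def GSyncStep [Fintype Q] (ΔC : Set (C × A × C)) (ΔQ : Set (Q × A × Q))
    (Ge Ga : A → Set (C ⊕ Q)) (x y : Conf C Q) : Prop :=
  ∃ a : A, GuardOK (Ge a) (Ga a) x ∧ SyncStepOn ΔC ΔQ a x y

lemma GuardOK.mono {Ge Ga : Set (C ⊕ Q)} {x d : Conf C Q} (hxd : Le0 x d)
    (h : GuardOK Ge Ga x) : GuardOK Ge Ga d := by
  obtain ⟨hc, hle, hzero⟩ := hxd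
  have hpos : ∀ q, 1 ≤ d.2 q → 1 ≤ x.2 q := fun q hq => by
    have := (hzero q).not.mpr (by omega)
    omega
  obtain ⟨hc_ex | ⟨q, hq, hq_ex⟩, hc_all, hq_all⟩ := h
  · exact ⟨Or.inl (hc ▸ hc_ex), hc ▸ hc_all, fun q hq => hq_all q (hpos q hq)⟩
  · exact ⟨Or.inr ⟨q, hq.trans (hle q), hq_ex⟩, hc ▸ hc_all, fun q hq => hq_all q (hpos q hq)⟩

section Le0Vec

variable {ι κ : Type*}

def Le0Vec (u v : ι → ℕ) : Prop :=
  (∀ i, u i ≤ v i) ∧ ∀ i, (u i = 0 ↔ v i = 0)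

lemma Le0Vec.refl (u : ι → ℕ) : Le0Vec u u :=
  ⟨fun _ => le_rfl, fun _ => Iff.rfl⟩

lemma Le0Vec.sum [Fintype ι] {f g : ι → κ → ℕ} (h : ∀ i, Le0Vec (f i) (g i)) :
    Le0Vec (fun j => ∑ i, f i j) (fun j => ∑ i, g i j) := by
  refine ⟨fun j => Finset.sum_le_sum fun i _ => (h i).1 j, fun j => ?_⟩
  simp only [Finset.sum_eq_zero_iff, Finset.mem_univ, true_implies]
  exact forall_congr' fun i => (h i).2 j

lemma exists_le0Vec_sum_eq [Fintype κ] (u : κ → ℕ) {n : ℕ} (hle : ∑ j, u j ≤ n)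
    (hzero : ∑ j, u j = 0 → n = 0) : ∃ r, Le0Vec u r ∧ ∑ j, r j = n := by
  classical
  by_cases hu : ∑ j, u j = 0
  · exact ⟨u, Le0Vec.refl u, by rw [hu, hzero hu]⟩
  obtain ⟨j₀, -, hj₀⟩ := Finset.exists_ne_zero_of_sum_ne_zero hu
  refine ⟨u + Pi.single j₀ (n - ∑ j, u j), ⟨fun j => le_self_add, fun j => ?_⟩, ?_⟩
  · rcases eq_or_ne j j₀ with rfl | hj
    · simp [hj₀]
    · simp [hj]
  · simp only [Pi.add_apply]
    rw [Finset.sum_add_distrib, Finset.sum_pi_single', if_pos (Finset.mem_univ _)]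
    omega

lemma exists_le0Vec_rowSum_eq [Fintype κ] (K : ι → κ → ℕ) {w : ι → ℕ}
    (h : Le0Vec (fun i => ∑ j, K i j) w) :
    ∃ K' : ι → κ → ℕ, (∀ i, Le0Vec (K i) (K' i)) ∧ ∀ i, ∑ j, K' i j = w i := by
  choose K' hK' hsum using fun i => exists_le0Vec_sum_eq (K i) (h.1 i) (h.2 i).1
  exact ⟨K', hK', hsum⟩

end Le0Vec

section Transport

variable {ι κ : Type*} [Fintype ι] [Fintype κ]

def Transportable (E : ι → κ → Prop) (u : ι → ℕ) (v : κ → ℕ) : Prop :=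
  ∃ K : ι → κ → ℕ, (∀ i j, K i j ≠ 0 → E i j) ∧ (∀ i, ∑ j, K i j = u i) ∧
    ∀ j, ∑ i, K i j = v j

lemma Transportable.flip {E : ι → κ → Prop} {u : ι → ℕ} {v : κ → ℕ}
    (h : Transportable E u v) : Transportable (flip E) v u := by
  obtain ⟨K, hE, hrow, hcol⟩ := h
  exact ⟨fun j i => K i j, fun j i => hE i j, hcol, hrow⟩

lemma Transportable.exists_of_le0Vec_left {E : ι → κ → Prop} {u u' : ι → ℕ} {v : κ → ℕ}
    (h : Transportable E u v) (hu : Le0Vec u u') :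
    ∃ v', Transportable E u' v' ∧ Le0Vec v v' := by
  obtain ⟨K, hE, hrow, hcol⟩ := h
  obtain ⟨K', hK', hrow'⟩ := exists_le0Vec_rowSum_eq K (w := u') (by simpa only [hrow] using hu)
  refine ⟨fun j => ∑ i, K' i j, ⟨K', fun i j hne => hE i j (mt ((hK' i).2 j).mp hne), hrow',
    fun _ => rfl⟩, ?_⟩
  simpa only [hcol] using Le0Vec.sum hK'

lemma Transportable.exists_of_le0Vec_right {E : ι → κ → Prop} {u : ι → ℕ} {v v' : κ → ℕ}
    (h : Transportable E u v) (hv : Le0Vec v v') :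
    ∃ u', Transportable E u' v' ∧ Le0Vec u u' := by
  obtain ⟨u', hu', hle⟩ := h.flip.exists_of_le0Vec_left hv
  exact ⟨u', hu'.flip, hle⟩

end Transport

def UserMove (ΔQ : Set (Q × A × Q)) (a : A) (p p' : Q) : Prop :=
  (p, a, p') ∈ ΔQ ∨ (p = p' ∧ ¬ ∃ q', (p, a, q') ∈ ΔQ)

section SyncStep

variable [Fintype Q] {ΔC : Set (C × A × C)} {ΔQ : Set (Q × A × Q)} {a : A}

/-- The plan is the step's multiplicity matrix plus, on the diagonal, the processes that stay
put. -/
lemma syncStepOn_iff {x y : Conf C Q} :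
    SyncStepOn ΔC ΔQ a x y ↔
      ((∃ c', (x.1, a, c') ∈ ΔC) → (x.1, a, y.1) ∈ ΔC) ∧
      (¬ (∃ c', (x.1, a, c') ∈ ΔC) → y.1 = x.1) ∧
      Transportable (UserMove ΔQ a) x.2 y.2 := by
  classical
  refine and_congr_right' (and_congr_right' ⟨?_, ?_⟩)
  · rintro ⟨k, hk, hrow, hcol, hcol_stay⟩
    have hrow_stay : ∀ p p', ¬ (∃ q', (p, a, q') ∈ ΔQ) → k p p' = 0 :=
      fun p p' hp => by_contra fun hne => hp ⟨p', hk p p' hne⟩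
    refine ⟨fun p p' => k p p' + if p = p' then
      (if ∃ q', (p, a, q') ∈ ΔQ then 0 else x.2 p) else 0, fun p p' hne => ?_, fun p => ?_,
      fun p' => ?_⟩
    · by_cases hkp : k p p' = 0
      · simp only [hkp, zero_add, ne_eq, ite_eq_right_iff, not_forall] at hne
        obtain ⟨rfl, hne⟩ := hne
        exact Or.inr ⟨rfl, fun hp => hne (if_pos hp)⟩
      · exact Or.inl (hk p p' hkp)
    · rw [Finset.sum_add_distrib, Finset.sum_ite_eq, if_pos (Finset.mem_univ _)]
      split_ifs with hp
      · rw [hrow p hp, add_zero]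
      · simp only [hrow_stay p _ hp, Finset.sum_const_zero, zero_add]
    · rw [Finset.sum_add_distrib, Finset.sum_ite_eq', if_pos (Finset.mem_univ _)]
      split_ifs with hp
      · rw [hcol p' hp, add_zero]
      · rw [hcol_stay p' hp, add_comm]
  · rintro ⟨K, hK, hrow, hcol⟩
    have hK_stay : ∀ p p', ¬ (∃ q', (p, a, q') ∈ ΔQ) →
        K p p' = if p = p' then K p p else 0 := fun p p' hp => by
      split_ifs with hpp'
      · rw [hpp']
      · by_contra hne
        exact hpp' ((hK p p' hne).resolve_left fun h => hp ⟨p', h⟩).1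
    refine ⟨fun p p' => if ∃ q', (p, a, q') ∈ ΔQ then K p p' else 0, fun p p' hne => ?_,
      fun q hq => ?_, fun q hq => ?_, fun q hq => ?_⟩
    · dsimp only at hne
      split_ifs at hne with hp
      · exact (hK p p' hne).resolve_right fun h => h.2 hp
      · exact absurd rfl hne
    · simp only [if_pos hq, hrow q]
    · dsimp only
      rw [← hcol q]
      refine Finset.sum_congr rfl fun p _ => ?_
      split_ifs with hp
      · rfl
      · rw [hK_stay p q hp, if_neg (by rintro rfl; exact hp hq)]
    · have hx : x.2 q = K q q := by
        rw [← hrow q, Finset.sum_congr rfl fun p' _ => hK_stay q p' hq, Finset.sum_ite_eq,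
          if_pos (Finset.mem_univ _)]
      have hsplit : ∀ p, K p q =
          (if p = q then K q q else 0) + if ∃ q', (p, a, q') ∈ ΔQ then K p q else 0 := by
        intro p
        split_ifs with hpq hp hp
        · exact absurd (hpq ▸ hp) hq
        · rw [hpq, add_zero]
        · rw [zero_add]
        · rw [hK_stay p q hp, if_neg hpq, add_zero]
      rw [← hcol q, hx, Finset.sum_congr rfl fun p _ => hsplit p, Finset.sum_add_distrib,
        Finset.sum_ite_eq', if_pos (Finset.mem_univ _)]

lemma SyncStepOn.exists_forward {x y d : Conf C Q} (h : SyncStepOn ΔC ΔQ a x y)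
    (hxd : Le0 x d) : ∃ d', SyncStepOn ΔC ΔQ a d d' ∧ Le0 y d' := by
  obtain ⟨c, v⟩ := x
  obtain ⟨_, w⟩ := d
  obtain ⟨rfl, hvw⟩ := hxd
  obtain ⟨hctrl, hstay, hplan⟩ := syncStepOn_iff.mp h
  obtain ⟨w', hplan', hle⟩ := hplan.exists_of_le0Vec_left hvw
  exact ⟨(y.1, w'), syncStepOn_iff.mpr ⟨hctrl, hstay, hplan'⟩, rfl, hle⟩

lemma SyncStepOn.exists_backward {x y d' : Conf C Q} (h : SyncStepOn ΔC ΔQ a x y)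
    (hyd : Le0 y d') : ∃ d, SyncStepOn ΔC ΔQ a d d' ∧ Le0 x d := by
  obtain ⟨c', v'⟩ := y
  obtain ⟨_, w'⟩ := d'
  obtain ⟨rfl, hvw⟩ := hyd
  obtain ⟨hctrl, hstay, hplan⟩ := syncStepOn_iff.mp h
  obtain ⟨w, hplan', hle⟩ := hplan.exists_of_le0Vec_right hvw
  exact ⟨(x.1, w), syncStepOn_iff.mpr ⟨hctrl, hstay, hplan'⟩, rfl, hle⟩

end SyncStep

theorem stmt7_general [Fintype Q]
    (ΔC : Set (C × A × C)) (ΔQ : Set (Q × A × Q))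
    (Ge Ga : A → Set (C ⊕ Q))
    (T : Set (Conf C Q × Conf C Q))
    (hT : ∀ x y : Conf C Q, (x, y) ∈ T ↔ GSyncStep ΔC ΔQ Ge Ga x y) :
    FwdCompat T ∧ BwdCompat T := by
  constructor
  · intro x y d hxy hxd
    obtain ⟨a, hguard, hstep⟩ := (hT x y).mp hxy
    obtain ⟨d', hstep', hyd⟩ := SyncStepOn.exists_forward hstep hxd
    exact ⟨d', (hT d d').mpr ⟨a, GuardOK.mono hxd hguard, hstep'⟩, hyd⟩
  · intro x y d' hxy hyd
    obtain ⟨a, hguard, hstep⟩ := (hT x y).mp hxy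
    obtain ⟨d, hstep', hxd⟩ := SyncStepOn.exists_backward hstep hyd
    exact ⟨d, (hT d d').mpr ⟨a, GuardOK.mono hxd hguard, hstep'⟩, hxd⟩

/-- Every counter system whose steps are exactly the guarded
synchronization steps induced by a finite set of synchronization transitions
together with a guard pair `(Ge a, Ga a)` for each label `a` is fully
`≼₀`-compatible. -/
theorem stmt7 [Fintype C] [Fintype Q] [Nonempty C] [Nonempty Q] [Fintype A]
    (ΔC : Set (C × A × C)) (ΔQ : Set (Q × A × Q))
    (Ge Ga : A → Set (C ⊕ Q))
    (T : Set (Conf C Q × Conf C Q))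
    (hT : ∀ x y : Conf C Q, (x, y) ∈ T ↔ GSyncStep ΔC ΔQ Ge Ga x y) :
    FwdCompat T ∧ BwdCompat T :=
  stmt7_general ΔC ΔQ Ge Ga T hT

end CS01
end

section
/- Let 𝒞 = (C, Q, 𝒯) be a counter system whose steps are exactly the disjunctive-guard steps induced by a finite set of disjunctive-guard transitions, and let 𝒞_α be its 01-counter system. Then Traces^ω(𝒞) = Traces^ω(𝒞_α): the set of infinite controller traces arising from infinite runs of 𝒞 equals the set of infinite controller traces arising from infinite runs of 𝒞_α, where the infinite trace of an infinite run is the ω-word over C obtained by projecting each configuration to its controller component and deleting every letter equal to its immediate predecessor, and only runs whose controller projection changes infinitely often contribute an infinite trace. -/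
/-!
A run of the 01-counter system is simulated by a concrete run whose configuration keeps
occupied every state occupied in the abstract one, with at least `2 ^ e` processes in each
occupied state, `e` the number of empty states. Controller steps are copied. A user step into a
state that is already occupied is skipped; one into an empty state is made by half of the
processes of the source state, so the invariant survives with `e` one smaller. Skipped steps do
not change the controller state, so deleting them yields a genuine run with the same
destuttered trace. Conversely, applying `α` to a run of `𝒞` gives a run of `𝒞_α`.
-/


namespace CS01

variable {C Q A : Type*}

/-- `t` is the destuttered infinite controller trace of the infinite run `ρ`:
there is a decomposition of `ℕ` into consecutive blocks, on the `n`-th of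
which the controller component of `ρ` is constantly `t n`, with consecutive
block values distinct.  (In particular only runs whose controller projection
changes infinitely often have an infinite trace.) -/
def IsInfTraceOf (ρ : ℕ → Conf C Q) (t : ℕ → C) : Prop :=
  ∃ φ : ℕ → ℕ, StrictMono φ ∧ φ 0 = 0 ∧
    (∀ n k, φ n ≤ k → k < φ (n + 1) → (ρ k).1 = t n) ∧
    ∀ n, t n ≠ t (n + 1)

/-- The infinite controller traces of the counter system. -/
def InfTraces (T : Set (Conf C Q × Conf C Q)) (c0 : C) (Q0 : Set Q) :
    Set (ℕ → C) :=
  {t | ∃ ρ : ℕ → Conf C Q, (ρ 0).1 = c0 ∧ (∀ q ∉ Q0, (ρ 0).2 q = 0) ∧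
    (∀ n, (ρ n, ρ (n + 1)) ∈ T) ∧ IsInfTraceOf ρ t}

/-- The infinite controller traces of the 01-counter system. -/
def AbsInfTraces (T : Set (Conf C Q × Conf C Q)) (c0 : C) (Q0 : Set Q) :
    Set (ℕ → C) :=
  {t | ∃ σ : ℕ → Conf C Q, (σ 0).1 = c0 ∧ (∀ q, (σ 0).2 q ≤ 1) ∧
    (∀ q ∉ Q0, (σ 0).2 q = 0) ∧
    (∀ n, AbsStep T (σ n) (σ (n + 1))) ∧ IsInfTraceOf σ t}

lemma IsInfTraceOf.congr_fst {ρ ρ' : ℕ → Conf C Q} {t : ℕ → C} (h : ∀ n, (ρ n).1 = (ρ' n).1)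
    (ht : IsInfTraceOf ρ t) : IsInfTraceOf ρ' t := by
  obtain ⟨φ, hφ, hφ0, hblock, hne⟩ := ht
  exact ⟨φ, hφ, hφ0, fun n k h₁ h₂ => h k ▸ hblock n k h₁ h₂, hne⟩

lemma IsInfTraceOf.infinite_setOf_succ_ne {ρ : ℕ → Conf C Q} {t : ℕ → C}
    (ht : IsInfTraceOf ρ t) : {n | ρ (n + 1) ≠ ρ n}.Infinite := by
  obtain ⟨φ, hφ, hφ0, hblock, hne⟩ := ht
  have hchange : ∀ n, ∃ k, n ≤ k ∧ (ρ k).1 = t n ∧ (ρ (k + 1)).1 = t (n + 1) := fun n => by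
    have := hφ (Nat.lt_add_one n)
    have := hφ (Nat.lt_add_one (n + 1))
    have : n + 1 ≤ φ (n + 1) := hφ.le_apply
    exact ⟨φ (n + 1) - 1, by omega, hblock n _ (by omega) (by omega),
      hblock (n + 1) _ (by omega) (by omega)⟩
  refine Set.infinite_of_forall_exists_gt fun a => ?_
  obtain ⟨k, hk, h₁, h₂⟩ := hchange (a + 1)
  exact ⟨k, fun heq => hne (a + 1) (h₁.symm.trans (heq ▸ h₂)), by omega⟩

/-- A surjective monotone reindexing only repeats letters, so it leaves the trace unchanged. -/
lemma IsInfTraceOf.of_comp {ρ : ℕ → Conf C Q} {t : ℕ → C} {h : ℕ → ℕ} (hm : Monotone h)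
    (hs : Function.Surjective h) (ht : IsInfTraceOf (ρ ∘ h) t) : IsInfTraceOf ρ t := by
  obtain ⟨φ, hφ, hφ0, hblock, hne⟩ := ht
  have hblock' : ∀ n k, h (φ n) ≤ k → k < h (φ (n + 1)) → (ρ k).1 = t n := by
    intro n k h₁ h₂
    rcases h₁.eq_or_lt with rfl | hlt
    · exact hblock n (φ n) le_rfl (hφ n.lt_add_one)
    obtain ⟨m, rfl⟩ := hs k
    exact hblock n m (le_of_lt (hm.reflect_lt hlt)) (hm.reflect_lt h₂)
  refine ⟨h ∘ φ, ?_, ?_, hblock', hne⟩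
  · refine strictMono_nat_of_lt_succ fun n => (hm (hφ n.lt_add_one).le).lt_of_ne fun heq => ?_
    have h₁ := hblock n (φ n) le_rfl (hφ n.lt_add_one)
    have h₂ := hblock (n + 1) (φ (n + 1)) le_rfl (hφ (n + 1).lt_add_one)
    simp only [Function.comp_apply, heq] at h₁ h₂
    exact hne n (h₁.symm.trans h₂)
  · obtain ⟨m, hm0⟩ := hs 0
    simpa [hφ0, hm0] using hm (Nat.zero_le m)

lemma exists_chain_comp_of_stutter {α : Type*} {R : α → α → Prop} {D : ℕ → α}
    (hD : ∀ n, D (n + 1) = D n ∨ R (D n) (D (n + 1))) (hinf : {n | D (n + 1) ≠ D n}.Infinite) :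
    ∃ (ρ : ℕ → α) (h : ℕ → ℕ), Monotone h ∧ Function.Surjective h ∧ D = ρ ∘ h ∧ ρ 0 = D 0 ∧
      ∀ k, R (ρ k) (ρ (k + 1)) := by
  classical
  set p : ℕ → Prop := fun n => D (n + 1) ≠ D n
  let ρ : ℕ → α := fun
    | 0 => D 0
    | k + 1 => D (Nat.nth p k + 1)
  have hfactor : ∀ n, D n = ρ (Nat.count p n) := by
    intro n
    induction n with
    | zero => simp [ρ]
    | succ n ih =>
      by_cases hn : p n
      · rw [Nat.count_succ_eq_succ_count hn]
        simp only [ρ, Nat.nth_count hn]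
      · rw [Nat.count_succ_eq_count_iff.2 hn, ← ih]
        exact not_not.1 hn
  refine ⟨ρ, Nat.count p, Nat.count_monotone p,
    fun k => ⟨Nat.nth p k, Nat.count_nth_of_infinite hinf k⟩, funext hfactor, rfl, fun k => ?_⟩
  have hk : ρ k = D (Nat.nth p k) := by rw [hfactor, Nat.count_nth_of_infinite hinf]
  rw [hk]
  exact (hD _).resolve_left (Nat.nth_mem_of_infinite hinf k)

def Covers (d x : Conf C Q) : Prop :=
  d.1 = x.1 ∧ ∀ q, x.2 q ≠ 0 → d.2 q ≠ 0

lemma covers_alpha_iff {d x : Conf C Q} : Covers d (alpha x) ↔ Covers d x := by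
  unfold Covers alpha
  simp only [ne_eq, ite_eq_left_iff, one_ne_zero, imp_false, not_not]

lemma SatG.of_covers {d x : Conf C Q} {G : Set (C ⊕ Q)} (hdx : Covers d x) (h : SatG x G) :
    SatG d G := by
  rcases h with h | ⟨q, hq, hxq⟩
  · exact Or.inl (hdx.1 ▸ h)
  · exact Or.inr ⟨q, hq, Nat.one_le_iff_ne_zero.2 (hdx.2 q (Nat.one_le_iff_ne_zero.1 hxq))⟩

lemma moveN_ne_zero [DecidableEq Q] {v : Q → ℕ} {p p' q : Q} {i : ℕ} (h : moveN v p p' i q ≠ 0) :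
    q = p' ∨ v q ≠ 0 := by
  refine or_iff_not_imp_left.2 fun hq => ?_
  simp only [moveN, hq, if_false, add_zero] at h
  omega

section Ample

variable [Fintype Q]

def emptyStates (v : Q → ℕ) : Finset Q := Finset.univ.filter fun q => v q = 0

def Ample (v : Q → ℕ) : Prop :=
  ∀ q, v q ≠ 0 → 2 ^ (emptyStates v).card ≤ v q

lemma ample_pow_card_mul (v : Q → ℕ) : Ample fun q => 2 ^ Fintype.card Q * v q := by
  intro q hq
  calc 2 ^ (emptyStates _).card ≤ 2 ^ Fintype.card Q :=
        Nat.pow_le_pow_right two_pos (Finset.card_le_univ _)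
    _ ≤ 2 ^ Fintype.card Q * v q :=
        Nat.le_mul_of_pos_right _ (Nat.pos_of_ne_zero (right_ne_zero_of_mul hq))

variable [DecidableEq Q]

lemma Ample.exists_moveN {v : Q → ℕ} (hv : Ample v) {p p' : Q} (hp : v p ≠ 0) (hp' : v p' = 0) :
    ∃ i, 1 ≤ i ∧ i ≤ v p ∧ Ample (moveN v p p' i) ∧
      ∀ q, q = p' ∨ v q ≠ 0 → moveN v p p' i q ≠ 0 := by
  have hp'mem : p' ∈ emptyStates v := by simp [emptyStates, hp']
  obtain ⟨e, he⟩ : ∃ e, (emptyStates v).card = e + 1 :=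
    Nat.exists_eq_succ_of_ne_zero (Finset.card_ne_zero_of_mem hp'mem)
  have hvp : 2 ^ (e + 1) ≤ v p := he ▸ hv p hp
  have hpos : 0 < 2 ^ e := Nat.two_pow_pos e
  have hzero : ∀ q, moveN v p p' (2 ^ e) q = 0 ↔ q ≠ p' ∧ v q = 0 := by
    intro q
    unfold moveN
    split_ifs <;> grind
  have hempty : emptyStates (moveN v p p' (2 ^ e)) = (emptyStates v).erase p' := by
    ext q
    simp only [emptyStates, Finset.mem_filter, Finset.mem_univ, true_and, Finset.mem_erase,
      hzero]
  refine ⟨2 ^ e, hpos, by omega, fun q hq => ?_, fun q hq => by grind⟩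
  rw [hempty, Finset.card_erase_of_mem hp'mem, he, Nat.add_sub_cancel]
  unfold moveN at hq ⊢
  have := hv q
  split_ifs at hq ⊢ <;> grind

end Ample

section Simulation

variable [Fintype Q] [DecidableEq Q] {ΔC : Set (C × Set (C ⊕ Q) × C)}
  {ΔQ : Set (Q × Set (C ⊕ Q) × Q)}

lemma DGStep.simulate {x y d : Conf C Q} (hxy : DGStep ΔC ΔQ x y) (hdx : Covers d x)
    (hd : Ample d.2) :
    Covers d y ∨ ∃ d', DGStep ΔC ΔQ d d' ∧ Covers d' y ∧ Ample d'.2 := by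
  rcases hxy with ⟨G, hG, hyx, hGx, hGy⟩ | ⟨p, G, p', i, hi, hG, hyx, hip, hy, hGx, hGy⟩
  · have hdy : Covers (y.1, d.2) y := ⟨rfl, fun q hq => hdx.2 q (hyx ▸ hq)⟩
    exact Or.inr ⟨(y.1, d.2), Or.inl ⟨G, hdx.1 ▸ hG, rfl, hGx.of_covers hdx, hGy.of_covers hdy⟩,
      hdy, hd⟩
  have hdp : d.2 p ≠ 0 := hdx.2 p (by omega)
  have hyd : ∀ q, y.2 q ≠ 0 → q = p' ∨ d.2 q ≠ 0 := fun q hq =>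
    (moveN_ne_zero (hy ▸ hq)).imp_right (hdx.2 q)
  by_cases hdp' : d.2 p' = 0
  · obtain ⟨j, hj, hjp, hamp, hsupp⟩ := hd.exists_moveN hdp hdp'
    have hdy : Covers (d.1, moveN d.2 p p' j) y :=
      ⟨hdx.1.trans hyx.symm, fun q hq => hsupp q (hyd q hq)⟩
    exact Or.inr ⟨(d.1, moveN d.2 p p' j), Or.inr ⟨p, G, p', j, hj, hG, rfl, hjp, rfl,
      hGx.of_covers hdx, hGy.of_covers hdy⟩, hdy, hamp⟩
  · exact Or.inl ⟨hdx.1.trans hyx.symm, fun q hq => (hyd q hq).elim (· ▸ hdp') id⟩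

lemma exists_covering_stutter_run {T : Set (Conf C Q × Conf C Q)}
    (hT : ∀ x y : Conf C Q, (x, y) ∈ T ↔ DGStep ΔC ΔQ x y) {σ : ℕ → Conf C Q}
    (hσ : ∀ n, AbsStep T (σ n) (σ (n + 1))) {d₀ : Conf C Q} (hd₀ : Covers d₀ (σ 0))
    (hd₀' : Ample d₀.2) :
    ∃ D : ℕ → Conf C Q, D 0 = d₀ ∧
      ∀ n, Covers (D n) (σ n) ∧ (D (n + 1) = D n ∨ (D n, D (n + 1)) ∈ T) := by
  have hstep : ∀ n d, Covers d (σ n) ∧ Ample d.2 →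
      ∃ d', (Covers d' (σ (n + 1)) ∧ Ample d'.2) ∧ (d' = d ∨ (d, d') ∈ T) := by
    rintro n d ⟨hdσ, hd⟩
    obtain ⟨⟨x, y⟩, hxy, hx, hy⟩ := hσ n
    rw [← hx, covers_alpha_iff] at hdσ
    rcases ((hT x y).1 hxy).simulate hdσ hd with hdy | ⟨d', hdd', hdy, hd'⟩
    · exact ⟨d, ⟨hy ▸ covers_alpha_iff.2 hdy, hd⟩, Or.inl rfl⟩
    · exact ⟨d', ⟨hy ▸ covers_alpha_iff.2 hdy, hd'⟩, Or.inr ((hT d d').2 hdd')⟩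
  choose! f hf using hstep
  let D : ℕ → Conf C Q := fun n => Nat.rec d₀ f n
  have hinv : ∀ n, Covers (D n) (σ n) ∧ Ample (D n).2 := fun n => by
    induction n with
    | zero => exact ⟨hd₀, hd₀'⟩
    | succ n ih => exact (hf n (D n) ih).1
  exact ⟨D, rfl, fun n => ⟨(hinv n).1, (hf n (D n) (hinv n)).2⟩⟩

end Simulation

lemma infTraces_subset_absInfTraces (T : Set (Conf C Q × Conf C Q)) (c0 : C) (Q0 : Set Q) :
    InfTraces T c0 Q0 ⊆ AbsInfTraces T c0 Q0 := by
  rintro t ⟨ρ, hρ0, hρQ0, hρ, ht⟩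
  refine ⟨alpha ∘ ρ, hρ0, fun q => ?_, fun q hq => by simp [alpha, hρQ0 q hq],
    fun n => ⟨(ρ n, ρ (n + 1)), hρ n, rfl, rfl⟩, ht.congr_fst fun _ => rfl⟩
  simp only [Function.comp_apply, alpha]
  split_ifs <;> simp

lemma absInfTraces_subset_infTraces [Fintype Q] [DecidableEq Q]
    {ΔC : Set (C × Set (C ⊕ Q) × C)} {ΔQ : Set (Q × Set (C ⊕ Q) × Q)}
    {T : Set (Conf C Q × Conf C Q)} (hT : ∀ x y : Conf C Q, (x, y) ∈ T ↔ DGStep ΔC ΔQ x y)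
    (c0 : C) (Q0 : Set Q) :
    AbsInfTraces T c0 Q0 ⊆ InfTraces T c0 Q0 := by
  rintro t ⟨σ, hσ0, -, hσQ0, hσ, ht⟩
  obtain ⟨D, hD0, hD⟩ := exists_covering_stutter_run hT hσ
    (d₀ := ((σ 0).1, fun q => 2 ^ Fintype.card Q * (σ 0).2 q))
    ⟨rfl, fun q hq => by simp [hq]⟩ (ample_pow_card_mul _)
  have htD : IsInfTraceOf D t := ht.congr_fst fun n => (hD n).1.1.symm
  obtain ⟨ρ, h, hmono, hsurj, hDρ, hρ0, hρ⟩ :=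
    exists_chain_comp_of_stutter (R := fun a b => (a, b) ∈ T) (fun n => (hD n).2)
      htD.infinite_setOf_succ_ne
  refine ⟨ρ, by rw [hρ0, hD0, hσ0], fun q hq => by simp [hρ0, hD0, hσQ0 q hq], hρ,
    IsInfTraceOf.of_comp hmono hsurj (hDρ ▸ htD)⟩

theorem stmt15_general [Fintype Q] [DecidableEq Q]
    (ΔC : Set (C × Set (C ⊕ Q) × C)) (ΔQ : Set (Q × Set (C ⊕ Q) × Q))
    (T : Set (Conf C Q × Conf C Q))
    (hT : ∀ x y : Conf C Q, (x, y) ∈ T ↔ DGStep ΔC ΔQ x y)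
    (c0 : C) (Q0 : Set Q) :
    InfTraces T c0 Q0 = AbsInfTraces T c0 Q0 :=
  (infTraces_subset_absInfTraces T c0 Q0).antisymm (absInfTraces_subset_infTraces hT c0 Q0)

/-- For a counter system whose steps are exactly the
disjunctive-guard steps induced by a finite set of disjunctive-guard
transitions, the set of infinite controller traces equals that of its
01-counter system. -/
theorem stmt15 [Fintype C] [Fintype Q] [Nonempty C] [Nonempty Q] [DecidableEq Q]
    (ΔC : Set (C × Set (C ⊕ Q) × C)) (ΔQ : Set (Q × Set (C ⊕ Q) × Q))
    (T : Set (Conf C Q × Conf C Q))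
    (hT : ∀ x y : Conf C Q, (x, y) ∈ T ↔ DGStep ΔC ΔQ x y)
    (c0 : C) (Q0 : Set Q) :
    InfTraces T c0 Q0 = AbsInfTraces T c0 Q0 :=
  stmt15_general ΔC ΔQ T hT c0 Q0

end CS01
end
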